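/- For the divisorial polytope of threefold 3.21 (Figure 5), the pair (ψ : x ↦ 1/x on ℙ¹, F = [[0,1],[1,0]] ∈ GL(2,ℤ)) satisfies Ψ₀ ∘ F = Ψ_∞ and Ψ_∞ ∘ F = Ψ₀ and Ψ₁ ∘ F = Ψ₁, where Ψ₀, Ψ_∞, Ψ₁ are the piecewise affine functions on Box = conv{(-2,1),(-3,3),(-1,3),(3,-1),(3,-3),(1,-2)} determined by: Ψ₀ has values 0,0,0,-2,-2,-1 at those respective vertices with the region conv{(-1,0),(-1,3),(3,-1),(3,-3),(1,-2),(-2,1)} shaded (slope (-1/2,0) there), Ψ_∞ = Ψ₀ ∘ swap, and Ψ₁ has vertex values 1,2,2,2,2,1 with a crease along the segment from (-3,3) to (3,-3). -/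

import Mathlib

theorem Prod.image_swap_convexHull {𝕜 E : Type*} [Semiring 𝕜] [PartialOrder 𝕜]
    [AddCommMonoid E] [Module 𝕜 E] {s : Set (E × E)} (hs : Prod.swap '' s = s) :
    Prod.swap '' convexHull 𝕜 s = convexHull 𝕜 s := by
  have h := (LinearEquiv.prodComm 𝕜 E E).toLinearMap.image_convexHull s
  exact h.trans (congrArg _ hs)

lemma image_swap_hexagonVertices :
    Prod.swap '' ({((-2 : ℝ), (1 : ℝ)), (-3, 3), (-1, 3), (3, -1), (3, -3), (1, -2)} :
      Set (ℝ × ℝ)) = {((-2 : ℝ), (1 : ℝ)), (-3, 3), (-1, 3), (3, -1), (3, -3), (1, -2)} := by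
  ext q
  simp only [Set.image_insert_eq, Set.image_singleton, Prod.swap_prod_mk, Set.mem_insert_iff,
    Set.mem_singleton_iff]
  tauto

/-- The symmetry of the divisorial polytope of the Fano threefold 3.21: with
Box the hexagon conv{(-2,1),(-3,3),(-1,3),(3,-1),(3,-3),(1,-2)},
Ψ₀(x,y) = min(0, -(x+1)/2) (vertex values 0,0,0,-2,-2,-1, slope (-1/2,0) on
the shaded region), Ψ_∞ = Ψ₀ ∘ swap, and Ψ₁(x,y) = min(2, x+y+2) (vertex
values 1,2,2,2,2,1 with crease along the segment from (-3,3) to (3,-3)),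
the lattice automorphism F = [[0,1],[1,0]] (the swap (x,y) ↦ (y,x)) with
F(Box) = Box satisfies Ψ₀ ∘ F = Ψ_∞, Ψ_∞ ∘ F = Ψ₀ and Ψ₁ ∘ F = Ψ₁ on Box. -/
theorem stmt_19 (Box : Set (ℝ × ℝ))
    (hBox : Box = convexHull ℝ
      {((-2 : ℝ), (1 : ℝ)), (-3, 3), (-1, 3), (3, -1), (3, -3), (1, -2)})
    (F : ℝ × ℝ → ℝ × ℝ) (hF : ∀ p, F p = (p.2, p.1))
    (Ψ₀ Ψinf Ψ₁ : ℝ × ℝ → ℝ)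
    (h₀ : ∀ p ∈ Box, Ψ₀ p = min 0 (-(p.1 + 1) / 2))
    (hinf : ∀ p ∈ Box, Ψinf p = min 0 (-(p.2 + 1) / 2))
    (h₁ : ∀ p ∈ Box, Ψ₁ p = min 2 (p.1 + p.2 + 2)) :
    F '' Box = Box ∧
    (∀ p ∈ Box, Ψ₀ (F p) = Ψinf p) ∧
    (∀ p ∈ Box, Ψinf (F p) = Ψ₀ p) ∧
    (∀ p ∈ Box, Ψ₁ (F p) = Ψ₁ p) := by
  obtain rfl : F = Prod.swap := funext hF
  have himg : Prod.swap '' Box = Box := by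
    rw [hBox]
    exact Prod.image_swap_convexHull image_swap_hexagonVertices
  have hmem : ∀ p ∈ Box, p.swap ∈ Box := fun p hp => himg ▸ Set.mem_image_of_mem _ hp
  refine ⟨himg, fun p hp => ?_, fun p hp => ?_, fun p hp => ?_⟩
  · rw [h₀ _ (hmem p hp), hinf _ hp, Prod.fst_swap]
  · rw [hinf _ (hmem p hp), h₀ _ hp, Prod.snd_swap]
  · rw [h₁ _ (hmem p hp), h₁ _ hp, Prod.fst_swap, Prod.snd_swap, add_comm p.2]
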